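/- arXiv:1602.03350 — 3 statements merged into one kernel-verified Lean document; each statement's English description precedes it below -/
import Mathlib

section
/- Let Ψ be Pareto distributed with shape α > 2 and scale v = ((α−1)/α)·r, r > 0, and let c ≥ (α−1)/α. Then the expected energy E_exp = g·r + i·∫_v^{c·r} (c·r − ψ)·α·vᵃ/ψ^{α+1} dψ + i·(c·r − v)·0 equals [g + i·((α−1)^{α−1}·c·(α·c)^{−α} + c − 1)]·r. -/
open Real intervalIntegral

/-! Splitting `(b - ψ) ψ^{-(α+1)} = b ψ^{-(α+1)} - ψ^{-α}` turns the idle-energy partial moment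
into two power integrals. With `v = ((α-1)/α) r` the term `α v/(α-1)` is exactly `r`, and the
boundary term `v^α (c r)^{1-α}/(α-1)` is `(α-1)^{α-1} c (α c)^{-α} r`. -/

theorem integral_sub_mul_rpow_neg_add_one {a b β : ℝ} (ha : 0 < a) (hb : 0 < b)
    (hβ₀ : β ≠ 0) (hβ₁ : β ≠ 1) :
    ∫ ψ in a..b, (b - ψ) * ψ ^ (-(β + 1)) =
      b * a ^ (-β) / β - a ^ (1 - β) / (β - 1) + b ^ (1 - β) / (β * (β - 1)) := by
  have h0 : (0 : ℝ) ∉ Set.uIcc a b := Set.notMem_uIcc_of_lt ha hb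
  have hsplit : Set.EqOn (fun ψ : ℝ => (b - ψ) * ψ ^ (-(β + 1)))
      (fun ψ => b * ψ ^ (-(β + 1)) - ψ ^ (-β)) (Set.uIcc a b) := by
    intro ψ hψ
    have hψ : 0 < ψ := (lt_min ha hb).trans_le hψ.1
    have hpow : ψ ^ (-β) = ψ * ψ ^ (-(β + 1)) := by
      rw [← rpow_one_add' hψ.le (by intro h; apply hβ₀; linarith)]; ring_nf
    simp only [hpow]; ring
  rw [integral_congr hsplit, integral_sub ((intervalIntegrable_rpow (Or.inr h0)).const_mul _)
      (intervalIntegrable_rpow (Or.inr h0)), integral_const_mul,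
    integral_rpow (Or.inr ⟨by intro h; apply hβ₀; linarith, h0⟩),
    integral_rpow (Or.inr ⟨by intro h; apply hβ₁; linarith, h0⟩),
    show -(β + 1) + 1 = -β by ring, show -β + 1 = 1 - β by ring]
  have hb₁ : b * b ^ (-β) = b ^ (1 - β) := by
    rw [sub_eq_add_neg, rpow_add hb, rpow_one]
  have hβ₁' : β - 1 ≠ 0 := sub_ne_zero.mpr hβ₁
  field_simp
  linear_combination (β - 1) ^ 2 * hb₁

theorem integral_sub_mul_pareto_density {v b α : ℝ} (hv : 0 < v) (hb : 0 < b)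
    (hα₀ : α ≠ 0) (hα₁ : α ≠ 1) :
    ∫ ψ in v..b, (b - ψ) * (α * v ^ α / ψ ^ (α + 1)) =
      b - α * v / (α - 1) + v ^ α * b ^ (1 - α) / (α - 1) := by
  have hdens : Set.EqOn (fun ψ : ℝ => (b - ψ) * (α * v ^ α / ψ ^ (α + 1)))
      (fun ψ => α * v ^ α * ((b - ψ) * ψ ^ (-(α + 1)))) (Set.uIcc v b) := by
    intro ψ hψ
    dsimp only
    rw [rpow_neg ((lt_min hv hb).trans_le hψ.1).le]
    ring
  have hv₁ : v ^ α * v ^ (-α) = 1 := by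
    rw [← rpow_add hv, add_neg_cancel, rpow_zero]
  have hv₂ : v ^ α * v ^ (1 - α) = v := by
    rw [← rpow_add hv, add_sub_cancel, rpow_one]
  have hα₁' : α - 1 ≠ 0 := sub_ne_zero.mpr hα₁
  rw [integral_congr hdens, integral_const_mul,
    integral_sub_mul_rpow_neg_add_one hv hb hα₀ hα₁]
  field_simp
  linear_combination (α - 1) * b * hv₁ - α * hv₂

theorem pareto_boundary_term_eq {α r c : ℝ} (hα : 1 < α) (hr : 0 < r) (hc : 0 < c) :
    ((α - 1) / α * r) ^ α * (c * r) ^ (1 - α) / (α - 1) =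
      (α - 1) ^ (α - 1) * c * (α * c) ^ (-α) * r := by
  have hα₀ : 0 < α := by linarith
  have hα₁ : 0 < α - 1 := by linarith
  rw [mul_rpow (by positivity) hr.le, div_rpow hα₁.le hα₀.le, mul_rpow hc.le hr.le,
    mul_rpow hα₀.le hc.le, rpow_neg hα₀.le, rpow_neg hc.le, rpow_sub hc, rpow_sub hr,
    rpow_sub hα₁, rpow_one, rpow_one, rpow_one]
  field_simp

theorem pareto_expected_energy_general (α r g i c : ℝ) (hα : 2 < α) (hr : 0 < r)
    (hc : (α - 1) / α ≤ c) :
    g * r + i * (∫ ψ in (((α - 1) / α) * r)..(c * r),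
        (c * r - ψ) * (α * (((α - 1) / α) * r) ^ α / ψ ^ (α + 1)))
      + i * (c * r - ((α - 1) / α) * r) * 0 =
    (g + i * ((α - 1) ^ (α - 1) * c * (α * c) ^ (-α) + c - 1)) * r := by
  have hα₁ : 0 < α - 1 := by linarith
  have hα₀ : 0 < α := by linarith
  have hc₀ : 0 < c := (div_pos hα₁ hα₀).trans_le hc
  rw [integral_sub_mul_pareto_density (by positivity) (by positivity) hα₀.ne' (by linarith),
    pareto_boundary_term_eq (by linarith) hr hc₀]
  field_simp
  ring

/-- Expected energy consumption for Pareto-distributed query volumes with shape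
α > 2, scale v = ((α−1)/α)·r, and idle threshold c·r ≥ v:
E_exp = g·r + i·∫_v^{c·r} (c·r − ψ)·α·vᵃ/ψ^{α+1} dψ + i·(c·r − v)·0
      = [g + i·((α−1)^{α−1}·c·(α·c)^{−α} + c − 1)]·r. -/
theorem pareto_expected_energy (α r g i c : ℝ) (hα : 2 < α) (hr : 0 < r)
    (hg : 0 ≤ g) (hi : 0 ≤ i) (hc : (α - 1) / α ≤ c) :
    g * r + i * (∫ ψ in (((α - 1) / α) * r)..(c * r),
        (c * r - ψ) * (α * (((α - 1) / α) * r) ^ α / ψ ^ (α + 1)))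
      + i * (c * r - ((α - 1) / α) * r) * 0 =
    (g + i * ((α - 1) ^ (α - 1) * c * (α * c) ^ (-α) + c - 1)) * r :=
  pareto_expected_energy_general α r g i c hα hr hc
end

section
/- Let Ψ be exponentially distributed with mean rn, r, n > 0, and let g ≥ 0, i, p > 0. Then B(c) = rn·(g+p) − p·c + (i+p)·∫₀^c (c − ψ)·(1/(rn))·e^{−ψ/(rn)} dψ equals (g − i)·rn + i·c + (i+p)·rn·e^{−c/(rn)} for c ≥ 0, and is minimized at c* = rn·ln((i+p)/i), with minimum value (g + i·ln((i+p)/i))·rn. -/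
/-!
The integrand `(c - ψ) · e^{-ψ/m} / m` has antiderivative `(m - c + ψ) · e^{-ψ/m}`, which gives the
closed form `B c = (g - i) m + i c + (i + p) m e^{-c/m}`. This is convex in `c`; its derivative
`i - (i + p) e^{-c/m}` vanishes at `c* = m log ((i + p) / i)`, and minimality follows from the
tangent-line bound `e^y ≥ e^x (1 + y - x)` at `x = -c*/m`.
-/

open Real

theorem intervalIntegral_sub_mul_exp_neg_div (m c : ℝ) (hm : m ≠ 0) :
    ∫ ψ in (0:ℝ)..c, (c - ψ) * ((1 / m) * exp (-ψ / m)) = c - m + m * exp (-c / m) := by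
  have hderiv : ∀ ψ : ℝ, HasDerivAt (fun ψ => (m - c + ψ) * exp (-ψ / m))
      ((c - ψ) * ((1 / m) * exp (-ψ / m))) ψ := by
    intro ψ
    have hexp : HasDerivAt (fun ψ : ℝ => exp (-ψ / m)) (exp (-ψ / m) * (-1 / m)) ψ :=
      ((hasDerivAt_neg ψ).div_const m).exp
    have hlin : HasDerivAt (fun ψ : ℝ => m - c + ψ) 1 ψ := (hasDerivAt_id ψ).const_add (m - c)
    refine (hlin.mul hexp).congr_deriv ?_
    field_simp
    ring
  rw [intervalIntegral.integral_eq_sub_of_hasDerivAt (fun ψ _ => hderiv ψ)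
    (Continuous.intervalIntegrable (by fun_prop) 0 c)]
  simp only [sub_add_cancel, add_zero, neg_zero, zero_div, exp_zero, mul_one]
  ring

theorem exp_neg_mul_log_div {m a : ℝ} (hm : m ≠ 0) (ha : 0 < a) :
    exp (-(m * log a) / m) = a⁻¹ := by
  rw [neg_div, mul_div_cancel_left₀ _ hm, exp_neg, exp_log ha]

theorem mul_log_div_add_one_le {m i k : ℝ} (hm : 0 < m) (hi : 0 < i) (hk : 0 < k) (c : ℝ) :
    i * m * (log (k / i) + 1) ≤ i * c + k * m * exp (-c / m) := by
  have hki : 0 < k / i := div_pos hk hi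
  have tangent : exp (-log (k / i)) * (1 + (log (k / i) - c / m)) ≤ exp (-c / m) := by
    calc exp (-log (k / i)) * (1 + (log (k / i) - c / m))
        ≤ exp (-log (k / i)) * exp (log (k / i) - c / m) := by
          gcongr
          linarith [add_one_le_exp (log (k / i) - c / m)]
      _ = exp (-c / m) := by rw [← exp_add]; ring_nf
  rw [exp_neg, exp_log hki, inv_div] at tangent
  have scaled := mul_le_mul_of_nonneg_left tangent (by positivity : (0:ℝ) ≤ k * m)
  have expand : k * m * (i / k * (1 + (log (k / i) - c / m))) = i * m * (log (k / i) + 1) - i * c := by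
    field_simp
    ring
  linarith

theorem exponential_billing_cost_general (r n g i p : ℝ) (hr : 0 < r) (hn : 0 < n)
    (hi : 0 < i) (hp : 0 < p)
    (B : ℝ → ℝ)
    (hB : ∀ c, B c = r * n * (g + p) - p * c +
        (i + p) * ∫ ψ in (0:ℝ)..c, (c - ψ) * ((1 / (r * n)) * Real.exp (-ψ / (r * n)))) :
    (∀ c, 0 ≤ c →
        B c = (g - i) * (r * n) + i * c + (i + p) * (r * n) * Real.exp (-c / (r * n))) ∧
      (0 ≤ r * n * Real.log ((i + p) / i)) ∧
      (∀ c, 0 ≤ c → B (r * n * Real.log ((i + p) / i)) ≤ B c) ∧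
      B (r * n * Real.log ((i + p) / i)) = (g + i * Real.log ((i + p) / i)) * (r * n) := by
  set m := r * n
  have hm : 0 < m := mul_pos hr hn
  have hip : 0 < i + p := by linarith
  have hB' : ∀ c, B c = (g - i) * m + (i * c + (i + p) * m * exp (-c / m)) := by
    intro c
    rw [hB, intervalIntegral_sub_mul_exp_neg_div m c hm.ne']
    ring
  have hB_opt : B (m * log ((i + p) / i)) = (g - i) * m + i * m * (log ((i + p) / i) + 1) := by
    rw [hB', exp_neg_mul_log_div hm.ne' (div_pos hip hi), inv_div]
    field_simp
  refine ⟨fun c _ => by rw [hB']; ring, ?_, fun c _ => ?_, ?_⟩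
  · exact mul_nonneg hm.le (log_nonneg ((le_div_iff₀ hi).2 (by linarith)))
  · rw [hB_opt, hB']
    linarith [mul_log_div_add_one_le hm hi hip c]
  · rw [hB_opt]
    ring

/-- Billing cost for exponentially distributed aggregate query volume with mean rn:
B(c) = rn·(g+p) − p·c + (i+p)·∫₀^c (c−ψ)·(1/(rn))·e^{−ψ/(rn)} dψ
     = (g−i)·rn + i·c + (i+p)·rn·e^{−c/(rn)} for c ≥ 0,
minimized at c* = rn·ln((i+p)/i), with minimum value (g + i·ln((i+p)/i))·rn. -/
theorem exponential_billing_cost (r n g i p : ℝ) (hr : 0 < r) (hn : 0 < n)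
    (hg : 0 ≤ g) (hi : 0 < i) (hp : 0 < p)
    (B : ℝ → ℝ)
    (hB : ∀ c, B c = r * n * (g + p) - p * c +
        (i + p) * ∫ ψ in (0:ℝ)..c, (c - ψ) * ((1 / (r * n)) * Real.exp (-ψ / (r * n)))) :
    (∀ c, 0 ≤ c →
        B c = (g - i) * (r * n) + i * c + (i + p) * (r * n) * Real.exp (-c / (r * n))) ∧
      (0 ≤ r * n * Real.log ((i + p) / i)) ∧
      (∀ c, 0 ≤ c → B (r * n * Real.log ((i + p) / i)) ≤ B c) ∧
      B (r * n * Real.log ((i + p) / i)) = (g + i * Real.log ((i + p) / i)) * (r * n) :=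
  exponential_billing_cost_general r n g i p hr hn hi hp B hB
end

section
/- Let r > 0, g, i > 0 and E > g·r. Define x = (E + i·r − g·r)/(i·r) (so x > 1) and c = W₀(−e^{−x}) + x, where W₀ is the principal branch of the Lambert W function. Then c ≥ 0 and [g + i·(c + e^{−c} − 1)]·r = E. -/
/-- Inversion of the exponential expected-energy formula via the Lambert W function:
for E > g·r, with x = (E + i·r − g·r)/(i·r) > 1 and c = W₀(−e^{−x}) + x, where w =
W₀(−e^{−x}) is the principal-branch value (characterized by w·e^w = −e^{−x} and
w ≥ −1), we have c ≥ 0 and [g + i·(c + e^{−c} − 1)]·r = E. -/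
theorem exponential_threshold_inversion (r g i E x w : ℝ) (hr : 0 < r) (hg : 0 < g)
    (hi : 0 < i) (hE : g * r < E)
    (hx : x = (E + i * r - g * r) / (i * r))
    (hw : w * Real.exp w = -Real.exp (-x))
    (hw1 : -1 ≤ w) :
    0 ≤ w + x ∧ (g + i * ((w + x) + Real.exp (-(w + x)) - 1)) * r = E := by
  have hir : (0:ℝ) < i * r := by positivity
  have hx1 : 1 < x := by
    rw [hx, lt_div_iff₀ hir]; linarith
  have hxe : x * (i * r) = E + i * r - g * r := by
    rw [hx]; field_simp
  have hexp : Real.exp (-(w + x)) = -w := by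
    have h1 : Real.exp (-(w + x)) = Real.exp (-w) * Real.exp (-x) := by
      rw [← Real.exp_add]; ring_nf
    have h2 : Real.exp (-x) = -(w * Real.exp w) := by linarith
    have h3 : Real.exp (-w) * Real.exp w = 1 := by
      rw [← Real.exp_add]; simp
    rw [h1, h2]
    nlinarith [h3]
  constructor
  · linarith
  · rw [hexp]; nlinarith [hxe]
end
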